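/- arXiv:1309.3821 — 3 statements merged into one kernel-verified Lean document; each statement's English description precedes it below -/
import Mathlib

section
/- The elliptic curve E : y^2 + xy + ε^2 y = x^3, where ε = (5 + √29)/2 is the fundamental unit of F = Q(√29), has discriminant equal to a unit in the ring of integers of F; hence E has good reduction at every prime of F. -/
open Polynomial

/-- The ring of integers of `F = ℚ(√29)`, modeled as `ℤ[w]` where
`w = (1+√29)/2` satisfies `w² = w + 7`. -/
noncomputable abbrev Osqrt29 : Type := AdjoinRoot (X ^ 2 - X - C 7 : Polynomial ℤ)

/-!
For `y² + xy + a y = x³` the discriminant is `a³ (1 - 27 a)`. With `a = ε²` the first factor is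
a unit; and `ε` is a root of `X² - 5X - 1`, which divides
`X⁴ - 27X² + 1 = (X² + 5X - 1)(X² - 5X - 1)`, so the second factor is `1 - 27ε² = -ε⁴`.
Hence `Δ = -ε¹⁰`, a unit, which lies in no prime ideal.
-/

theorem WeierstrassCurve.Δ_mk_one_zero_zero_zero {R : Type*} [CommRing R] (a : R) :
    (⟨1, 0, a, 0, 0⟩ : WeierstrassCurve R).Δ = a ^ 3 * (1 - 27 * a) := by
  simp only [WeierstrassCurve.Δ, WeierstrassCurve.b₂, WeierstrassCurve.b₄,
    WeierstrassCurve.b₆, WeierstrassCurve.b₈]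
  ring

namespace Osqrt29

local notation "w" => (AdjoinRoot.root (X ^ 2 - X - C 7 : ℤ[X]) : Osqrt29)

theorem root_sq : w ^ 2 = w + 7 := by
  have h := AdjoinRoot.eval₂_root (X ^ 2 - X - C 7 : ℤ[X])
  simp only [eval₂_sub, eval₂_X_pow, eval₂_X, map_ofNat, eval₂_ofNat] at h
  linear_combination h

theorem isUnit_root_add_two : IsUnit (w + 2) :=
  .of_mul_eq_one (w - 3) (by linear_combination root_sq)

theorem one_sub_mul_sq_root_add_two : 1 - 27 * (w + 2) ^ 2 = -(w + 2) ^ 4 := by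
  linear_combination ((w + 2) ^ 2 + 5 * (w + 2) - 1) * root_sq

end Osqrt29

/-- The elliptic curve `E : y² + xy + ε²y = x³` over `F = ℚ(√29)`,
where `ε = (5+√29)/2 = w + 2` is the fundamental unit, has discriminant
(computed from the standard formulas with `a₁ = 1`, `a₂ = 0`, `a₃ = ε²`,
`a₄ = 0`, `a₆ = 0`) a unit in the ring of integers; hence the discriminant lies
in no prime ideal, so `E` has good reduction at every prime of `F`. -/
theorem stmt0 :
    let w : Osqrt29 := AdjoinRoot.root _
    let ε : Osqrt29 := w + 2
    let a₁ : Osqrt29 := 1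
    let a₂ : Osqrt29 := 0
    let a₃ : Osqrt29 := ε ^ 2
    let a₄ : Osqrt29 := 0
    let a₆ : Osqrt29 := 0
    let b₂ : Osqrt29 := a₁ ^ 2 + 4 * a₂
    let b₄ : Osqrt29 := 2 * a₄ + a₁ * a₃
    let b₆ : Osqrt29 := a₃ ^ 2 + 4 * a₆
    let b₈ : Osqrt29 :=
      a₁ ^ 2 * a₆ + 4 * a₂ * a₆ - a₁ * a₃ * a₄ + a₂ * a₃ ^ 2 - a₄ ^ 2
    let Δ : Osqrt29 := -b₂ ^ 2 * b₈ - 8 * b₄ ^ 3 - 27 * b₆ ^ 2 + 9 * b₂ * b₄ * b₆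
    IsUnit Δ ∧ ∀ p : Ideal Osqrt29, p.IsPrime → Δ ∉ p := by
  intro w ε a₁ a₂ a₃ a₄ a₆ b₂ b₄ b₆ b₈ Δ
  have hΔ : Δ = -ε ^ 10 := by
    change (⟨1, 0, ε ^ 2, 0, 0⟩ : WeierstrassCurve Osqrt29).Δ = _
    rw [WeierstrassCurve.Δ_mk_one_zero_zero_zero, Osqrt29.one_sub_mul_sq_root_add_two]
    ring
  have hu : IsUnit Δ := hΔ ▸ (Osqrt29.isUnit_root_add_two.pow 10).neg
  exact ⟨hu, fun p _ => p.notMem_of_isUnit hu⟩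
end

section
/- Let F = Q(√193) with w = (1+√193)/2. The genus 2 curve C : y^2 + Q(x) y = P(x) over F, with Q(x) = −x − w and P(x) = 2x^6 + (−2w+7)x^5 + (−5w+47)x^4 + (−12w+85)x^3 + (−13w+97)x^2 + (−8w+56)x − 2w + 1, has discriminant Δ_C = −1. In particular C has everywhere good reduction over F. -/
open Polynomial

/-- The ring of integers `ℤ[w]` of `F = ℚ(√193)`, where `w = (1+√193)/2`
satisfies `w² = w + 48`. -/
noncomputable abbrev Osqrt193 : Type := AdjoinRoot (X ^ 2 - X - C 48 : Polynomial ℤ)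

/-!
Over `F` the sextic factors as `f = 4P + Q² = 8 g h` with monic cubics `g`, `h` whose difference
`g - h = 1/4 - (x² + x)/2` is free of `w`. Splitting the roots of `f` into those of `g` and of `h`,
`∏_{i<j} (rᵢ - rⱼ)² = disc g · disc h · Res(g, h)²`, where `Res(g, h) = ∏_{h(y)=0} g(y)` is the norm of
`g - h` over the roots of `h`. Using `w² = w + 48`: `disc g = (32 + 5w)/16`, `disc h = (37 - 5w)/16`
and `Res(g, h) = -1/128`, so `8¹⁰ · disc g · disc h · Res² = -2¹²`, i.e. `Δ_C = -1`, a unit.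
-/

open Finset

lemma prod_sq_sub_vecCons_six {R : Type*} [CommRing R] (a b c x y z : R) :
    ∏ p ∈ univ.filter (fun p : Fin 6 × Fin 6 => p.1 < p.2),
        (![a, b, c, x, y, z] p.1 - ![a, b, c, x, y, z] p.2) ^ 2 =
      ((a - b) * (a - c) * (b - c)) ^ 2 * ((x - y) * (x - z) * (y - z)) ^ 2 *
        ((x - a) * (x - b) * (x - c) * ((y - a) * (y - b) * (y - c)) *
          ((z - a) * (z - b) * (z - c))) ^ 2 := by
  rw [prod_filter, Fintype.prod_prod_type]
  simp only [Nat.succ_eq_add_one, Nat.reduceAdd, Fin.prod_univ_six, Fin.isValue, not_lt_zero,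
    ↓reduceIte, Fin.lt_one_iff, Matrix.cons_val_one, Matrix.cons_val_zero, mul_ite, one_mul,
    mul_one, Matrix.cons_val, ite_mul, Fin.reduceLT, one_ne_zero, lt_self_iff_false,
    Fin.reduceEq, mul_pow]
  rw [sub_sq_comm a x, sub_sq_comm a y, sub_sq_comm a z, sub_sq_comm b x, sub_sq_comm b y,
    sub_sq_comm b z, sub_sq_comm c x, sub_sq_comm c y, sub_sq_comm c z]
  ac_rfl

namespace Cubic

variable {K L : Type*} [Field K] [Field L] {φ : K →+* L} {P Q : Cubic K} {a b c x y z : L}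

lemma coeff_six_toPoly_mul (hP : P.a = 1) (hQ : Q.a = 1) :
    (P.toPoly * Q.toPoly).coeff 6 = 1 := by
  have hPQ : (P.toPoly * Q.toPoly).natDegree = 6 := by
    rw [(monic_of_a_eq_one hP).natDegree_mul (monic_of_a_eq_one hQ),
      natDegree_of_a_ne_zero (by simp [hP]), natDegree_of_a_ne_zero (by simp [hQ])]
  rw [← hPQ]
  exact (monic_of_a_eq_one hP).mul (monic_of_a_eq_one hQ)

lemma map_toPoly_mul_eq_prod (hP : P.a = 1) (hQ : Q.a = 1)
    (hPr : (P.map φ).roots = {a, b, c}) (hQr : (Q.map φ).roots = {x, y, z}) :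
    (P.toPoly * Q.toPoly).map φ = ∏ i, (X - C (![a, b, c, x, y, z] i)) := by
  rw [Polynomial.map_mul, ← map_toPoly, ← map_toPoly,
    eq_prod_three_roots (by simp [hP]) hPr, eq_prod_three_roots (by simp [hQ]) hQr]
  simp only [hP, hQ, map_one, one_mul, Fin.prod_univ_six, Fin.isValue, Matrix.cons_val_zero,
    Matrix.cons_val_one, Matrix.cons_val]
  ring

lemma prod_sq_sub_roots_eq_discr_discr_resultant (hP : P.a = 1) (hQ : Q.a = 1)
    (hPr : (P.map φ).roots = {a, b, c}) (hQr : (Q.map φ).roots = {x, y, z}) :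
    ∏ p ∈ univ.filter (fun p : Fin 6 × Fin 6 => p.1 < p.2),
        (![a, b, c, x, y, z] p.1 - ![a, b, c, x, y, z] p.2) ^ 2 =
      φ P.discr * φ Q.discr *
        ((P.map φ).toPoly.eval x * (P.map φ).toPoly.eval y * (P.map φ).toPoly.eval z) ^ 2 := by
  rw [prod_sq_sub_vecCons_six, discr_eq_prod_three_roots (by simp [hP]) hPr,
    discr_eq_prod_three_roots (by simp [hQ]) hQr, eq_prod_three_roots (by simp [hP]) hPr]
  simp [hP, hQ]

end Cubic

section Sqrt193

variable {K L : Type*} [Field K] [CharZero K] [Field L] {w : K}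

def cubicG (w : K) : Cubic K := ⟨1, (3 - w) / 2, (8 - w) / 2, (8 - w) / 4⟩

def cubicH (w : K) : Cubic K := ⟨1, (4 - w) / 2, (9 - w) / 2, (7 - w) / 4⟩

lemma four_mul_add_sq_eq_cubicG_mul_cubicH (hw : w ^ 2 = w + 48) :
    4 * (C 2 * X ^ 6 + C (-2 * w + 7) * X ^ 5 + C (-5 * w + 47) * X ^ 4 +
        C (-12 * w + 85) * X ^ 3 + C (-13 * w + 97) * X ^ 2 +
        C (-8 * w + 56) * X + C (-2 * w + 1)) + (C (-1) * X + C (-w)) ^ 2 =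
      C 8 * ((cubicG w).toPoly * (cubicH w).toPoly) := by
  refine Polynomial.funext fun t => ?_
  simp only [cubicG, cubicH, Cubic.toPoly, eval_add, eval_mul, eval_pow, eval_C, eval_X,
    eval_ofNat]
  linear_combination (1 - (2 * t ^ 2 + 2 * t + 1) ^ 2 / 2) * hw

lemma discr_cubicG (hw : w ^ 2 = w + 48) : (cubicG w).discr = (32 + 5 * w) / 16 := by
  simp only [Cubic.discr, cubicG]
  linear_combination (47 / 16 + w / 16 - w ^ 2 / 16) * hw

lemma discr_cubicH (hw : w ^ 2 = w + 48) : (cubicH w).discr = (37 - 5 * w) / 16 := by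
  simp only [Cubic.discr, cubicH]
  linear_combination (47 / 16 + w / 16 - w ^ 2 / 16) * hw

lemma prod_eval_cubicG_roots_cubicH {φ : K →+* L} {x y z : L} (hw : w ^ 2 = w + 48)
    (hr : ((cubicH w).map φ).roots = {x, y, z}) :
    ((cubicG w).map φ).toPoly.eval x * ((cubicG w).map φ).toPoly.eval y *
      ((cubicG w).map φ).toPoly.eval z = -1 / 128 := by
  have := charZero_of_injective_ringHom φ.injective
  have hv : φ w ^ 2 = φ w + 48 := by rw [← map_pow, hw, map_add, map_ofNat]
  have ha : (cubicH w).a ≠ 0 := one_ne_zero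
  have hb := Cubic.b_eq_three_roots ha hr
  have hc := Cubic.c_eq_three_roots ha hr
  have hd := Cubic.d_eq_three_roots ha hr
  simp only [cubicH, map_one, one_mul, map_div₀, map_sub, map_ofNat] at hb hc hd
  have hgh : ∀ t, ((cubicG w).map φ).toPoly.eval t =
      (t - x) * (t - y) * (t - z) + (1 / 4 - (t ^ 2 + t) / 2) := by
    intro t
    simp only [Cubic.map, Cubic.toPoly, cubicG, eval_add, eval_mul, eval_pow, eval_C, eval_X,
      map_one, eval_one, map_div₀, map_sub, map_ofNat]
    linear_combination t ^ 2 * hb + t * hc + hd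
  have hnorm : ∀ s₁ s₂ s₃ : L, s₁ = x + y + z → s₂ = x * y + x * z + y * z → s₃ = x * y * z →
      (1 / 4 - (x ^ 2 + x) / 2) * (1 / 4 - (y ^ 2 + y) / 2) * (1 / 4 - (z ^ 2 + z) / 2) =
        1 / 64 - 5 * s₃ / 16 - s₃ ^ 2 / 8 + s₂ / 8 - s₂ * s₃ / 8 + s₂ ^ 2 / 16 - s₁ / 32
          - s₁ * s₃ / 4 + s₁ * s₂ / 16 - s₁ ^ 2 / 32 := by
    rintro _ _ _ rfl rfl rfl
    ring
  simp only [hgh, sub_self, zero_mul, mul_zero, zero_add]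
  rw [hnorm ((φ w - 4) / 2) ((9 - φ w) / 2) ((φ w - 7) / 4) (by linear_combination -hb) hc
    (by linear_combination -hd)]
  linear_combination (-1 / 32 : L) * hv

end Sqrt193

/-- the genus 2 curve `C : y² + Q(x)y = P(x)` over
`F = ℚ(√193) ⊆ ℝ` (with `w = (1+√193)/2`) has discriminant `Δ_C = -1`:
writing the sextic `f = 4P + Q²` with leading coefficient `ℓ` and roots `r i`
in `ℂ`, Liu's discriminant `2⁻¹²·ℓ¹⁰·∏_{i<j}(rᵢ-rⱼ)²` equals `-1`.  In
particular `Δ_C = -1` lies in no prime ideal of `O_F = ℤ[w]`, so `C` has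
everywhere good reduction over `F`. -/
theorem stmt3 :
    let w : ℝ := (1 + Real.sqrt 193) / 2
    let Q : Polynomial ℝ := C (-1) * X + C (-w)
    let P : Polynomial ℝ :=
      C 2 * X ^ 6 + C (-2 * w + 7) * X ^ 5 + C (-5 * w + 47) * X ^ 4 +
        C (-12 * w + 85) * X ^ 3 + C (-13 * w + 97) * X ^ 2 +
        C (-8 * w + 56) * X + C (-2 * w + 1)
    let f : Polynomial ℝ := 4 * P + Q ^ 2
    let φ := algebraMap ℝ ℂ
    let ℓ : ℂ := φ (f.coeff 6)
    (∃ r : Fin 6 → ℂ,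
      f.map φ = C ℓ * ∏ i, (X - C (r i)) ∧
      ℓ ^ 10 * ∏ p ∈ Finset.univ.filter (fun p : Fin 6 × Fin 6 => p.1 < p.2),
          (r p.1 - r p.2) ^ 2 = φ (2 ^ 12 * (-1))) ∧
    (∀ p : Ideal Osqrt193, p.IsPrime → (-1 : Osqrt193) ∉ p) := by
  intro w Q P f φ ℓ
  have hw : w ^ 2 = w + 48 := by
    linear_combination Real.sq_sqrt (show (0 : ℝ) ≤ 193 by norm_num) / 4
  have hf : f = C 8 * ((cubicG w).toPoly * (cubicH w).toPoly) :=
    four_mul_add_sq_eq_cubicG_mul_cubicH hw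
  have hℓ : ℓ = 8 := by
    rw [show ℓ = φ (f.coeff 6) from rfl, hf, coeff_C_mul, Cubic.coeff_six_toPoly_mul rfl rfl,
      mul_one, map_ofNat]
  obtain ⟨a, b, c, hg⟩ := (Cubic.splits_iff_roots_eq_three (φ := φ) (P := cubicG w)
    one_ne_zero).mp (IsAlgClosed.splits _)
  obtain ⟨x, y, z, hh⟩ := (Cubic.splits_iff_roots_eq_three (φ := φ) (P := cubicH w)
    one_ne_zero).mp (IsAlgClosed.splits _)
  refine ⟨⟨![a, b, c, x, y, z], ?_, ?_⟩, fun p hp h => hp.one_notMem (by simpa using p.neg_mem h)⟩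
  · rw [hℓ, hf, Polynomial.map_mul, map_C, Cubic.map_toPoly_mul_eq_prod rfl rfl hg hh, map_ofNat]
  · have hΔ : (8 : ℝ) ^ 10 * ((32 + 5 * w) / 16 * ((37 - 5 * w) / 16)) * (-1 / 128) ^ 2 =
        2 ^ 12 * -1 := by
      linear_combination -6400 * hw
    rw [hℓ, Cubic.prod_sq_sub_roots_eq_discr_discr_resultant rfl rfl hg hh, discr_cubicG hw,
      discr_cubicH hw, prod_eval_cubicG_roots_cubicH hw hh, ← hΔ]
    simp only [map_mul, map_pow, map_ofNat, map_div₀, map_neg, map_one]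
    ring
end

section
/- Let F = Q(√233) with w = (1+√233)/2. The genus 2 curve C : y^2 + (x+1) y = −2x^6 − (2w−1)x^5 − 45x^4 − 4(2w−1)x^3 − 31x^2 + (w−1)x + 9 over F has discriminant equal to a unit of O_F times a power of the fundamental unit; in particular its discriminant is a unit, so C has everywhere good reduction over F. -/
open Polynomial

/-!
Over `F = ℚ(√233)` the sextic `f = 4P + Q²` factors as `-8 g ḡ`, where `g` is a monic cubic
and `ḡ` its Galois conjugate. Splitting the roots of `f` into those of `g` and of `ḡ`,
`ℓ¹⁰ ∏ (rᵢ - rⱼ)² = (-8)¹⁰ · disc g · disc ḡ · Res(g, ḡ)²`. Here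
`disc g = (13 - √233) / 32`, and `Res(g, ḡ) = ∏ ḡ(α) = ∏ (ḡ - g)(α) = -1/128`, the product running
over the roots `α` of `g`, where `ḡ - g` is a quadratic. As `(13 - √233)(13 + √233) = -64`,
the discriminant is `-2¹²`, so Liu's discriminant is the unit `-1`.
-/

namespace Cubic

section CommRing

variable {R : Type*} [CommRing R] {P : Cubic R} {x y z : R}

theorem eq_of_toPoly_eq_prod (h : P.toPoly = (X - C x) * (X - C y) * (X - C z)) :
    P = ⟨1, -(x + y + z), x * y + x * z + y * z, -(x * y * z)⟩ :=
  (toPoly_injective _ _).1 (h.trans prod_X_sub_C_eq)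

theorem discr_eq_of_toPoly_eq_prod (h : P.toPoly = (X - C x) * (X - C y) * (X - C z)) :
    P.discr = ((x - y) * (x - z) * (y - z)) ^ 2 := by
  rw [eq_of_toPoly_eq_prod h, discr]
  ring

/-- The right-hand side is the resultant of `P` and `u X² + v X + w`. -/
theorem prod_eval_quadratic_of_toPoly_eq_prod
    (h : P.toPoly = (X - C x) * (X - C y) * (X - C z)) (u v w : R) :
    (u * x ^ 2 + v * x + w) * (u * y ^ 2 + v * y + w) * (u * z ^ 2 + v * z + w) =
      w ^ 3 + u ^ 3 * P.d ^ 2 - v ^ 3 * P.d + u ^ 2 * w * P.c ^ 2 + u * w ^ 2 * P.b ^ 2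
        + v ^ 2 * w * P.c - 2 * u * w ^ 2 * P.c - v * w ^ 2 * P.b + 3 * u * v * w * P.d
        - u ^ 2 * v * P.c * P.d - 2 * u ^ 2 * w * P.b * P.d + u * v ^ 2 * P.b * P.d
        - u * v * w * P.b * P.c := by
  obtain rfl := eq_of_toPoly_eq_prod h
  ring

theorem coeff_toPoly_mul_toPoly_six (P Q : Cubic R) :
    (P.toPoly * Q.toPoly).coeff 6 = P.a * Q.a := by
  rw [← coeff_eq_a, ← coeff_eq_a]
  exact coeff_mul_add_eq_of_natDegree_le natDegree_cubic_le natDegree_cubic_le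

end CommRing

theorem exists_toPoly_eq_prod {K : Type*} [Field K] [IsAlgClosed K] (P : Cubic K)
    (ha : P.a = 1) : ∃ x y z : K, P.toPoly = (X - C x) * (X - C y) * (X - C z) := by
  have ha' : P.a ≠ 0 := by simp [ha]
  obtain ⟨x, y, z, h3⟩ :=
    (splits_iff_roots_eq_three (φ := RingHom.id K) ha').1 (IsAlgClosed.splits _)
  have h := eq_prod_three_roots ha' h3
  rw [show map (RingHom.id K) P = P from rfl, RingHom.id_apply, ha, C_1, one_mul] at h
  exact ⟨x, y, z, h⟩

end Cubic

theorem prod_filter_lt_sub_sq_fin_six {R : Type*} [CommRing R] (a b c d e f : R) :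
    ∏ p ∈ Finset.univ.filter (fun p : Fin 6 × Fin 6 => p.1 < p.2),
        (![a, b, c, d, e, f] p.1 - ![a, b, c, d, e, f] p.2) ^ 2 =
      ((a - b) * (a - c) * (b - c)) ^ 2 * ((d - e) * (d - f) * (e - f)) ^ 2 *
        ((a - d) * (a - e) * (a - f) * ((b - d) * (b - e) * (b - f)) *
          ((c - d) * (c - e) * (c - f))) ^ 2 := by
  simp only [Finset.prod_filter, Fintype.prod_prod_type, Fin.prod_univ_six, Fin.isValue,
    Fin.reduceLT, lt_self_iff_false, not_lt_zero, ↓reduceIte, Matrix.cons_val_zero,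
    Matrix.cons_val_one, Matrix.cons_val, one_mul, mul_one, mul_pow]
  ac_rfl

section

variable {K : Type*} [Field K] [CharZero K] {σ : K}

/-- For `σ = √233`, `f = -8 · cubicFactor₁ σ · cubicFactor₂ σ`, a pair of conjugate cubics. -/
def cubicFactor₁ (σ : K) : Cubic K := ⟨1, (5 + σ) / 4, (19 + σ) / 4, (23 + σ) / 8⟩

def cubicFactor₂ (σ : K) : Cubic K := ⟨1, (σ - 5) / 4, (19 - σ) / 4, (σ - 23) / 8⟩

theorem discr_cubicFactor₁ (hσ : σ ^ 2 = 233) : (cubicFactor₁ σ).discr = (13 - σ) / 32 := by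
  simp only [Cubic.discr, cubicFactor₁]
  linear_combination (365 / 256 - σ / 32 - σ ^ 2 / 256) * hσ

theorem discr_cubicFactor₂ (hσ : σ ^ 2 = 233) : (cubicFactor₂ σ).discr = (13 + σ) / 32 := by
  simp only [Cubic.discr, cubicFactor₂]
  linear_combination (365 / 256 + σ / 32 - σ ^ 2 / 256) * hσ

theorem eval_cubicFactor₂ (x : K) :
    (cubicFactor₂ σ).toPoly.eval x =
      (cubicFactor₁ σ).toPoly.eval x + (-5 / 2 * x ^ 2 + -σ / 2 * x + -23 / 4) := by
  simp only [Cubic.toPoly, cubicFactor₁, cubicFactor₂, eval_add, eval_mul, eval_pow, eval_C,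
    eval_X]
  ring

theorem prod_eval_cubicFactor₂ (hσ : σ ^ 2 = 233) {x y z : K}
    (h : (cubicFactor₁ σ).toPoly = (X - C x) * (X - C y) * (X - C z)) :
    (cubicFactor₂ σ).toPoly.eval x * (cubicFactor₂ σ).toPoly.eval y *
      (cubicFactor₂ σ).toPoly.eval z = -1 / 128 := by
  simp only [eval_cubicFactor₂, h, eval_mul, eval_sub, eval_X, eval_C, sub_self, mul_zero,
    zero_mul, zero_add]
  rw [Cubic.prod_eval_quadratic_of_toPoly_eq_prod h]
  simp only [cubicFactor₁]
  linear_combination (237 / 256 - σ ^ 2 / 256) * hσ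

theorem prod_sub_sq_roots_cubicFactor (hσ : σ ^ 2 = 233) {a₁ a₂ a₃ b₁ b₂ b₃ : K}
    (hg : (cubicFactor₁ σ).toPoly = (X - C a₁) * (X - C a₂) * (X - C a₃))
    (hh : (cubicFactor₂ σ).toPoly = (X - C b₁) * (X - C b₂) * (X - C b₃)) :
    (-8) ^ 10 * ∏ p ∈ Finset.univ.filter (fun p : Fin 6 × Fin 6 => p.1 < p.2),
        (![a₁, a₂, a₃, b₁, b₂, b₃] p.1 - ![a₁, a₂, a₃, b₁, b₂, b₃] p.2) ^ 2 = -2 ^ 12 := by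
  have hcross (t : K) : (t - b₁) * (t - b₂) * (t - b₃) = (cubicFactor₂ σ).toPoly.eval t := by
    simp [hh]
  rw [prod_filter_lt_sub_sq_fin_six, ← Cubic.discr_eq_of_toPoly_eq_prod hg,
    ← Cubic.discr_eq_of_toPoly_eq_prod hh, hcross, hcross, hcross, prod_eval_cubicFactor₂ hσ hg,
    discr_cubicFactor₁ hσ, discr_cubicFactor₂ hσ]
  linear_combination -64 * hσ

end

/-- the genus 2 curve `C : y² + (x+1)y = P(x)` over
`F = ℚ(√233) ⊆ ℝ` (with `w = (1+√233)/2`) has discriminant a unit of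
`O_F`: writing the sextic `f = 4P + Q²` with leading coefficient `ℓ` and roots
`r i` in `ℂ`, Liu's discriminant `Δ_C = 2⁻¹²·ℓ¹⁰·∏_{i<j}(rᵢ-rⱼ)²` is a unit
`u` of the ring of integers of `F`; hence `C` has everywhere good reduction
over `F`. -/
theorem stmt16 :
    let w : ℝ := (1 + Real.sqrt 233) / 2
    let Q : Polynomial ℝ := X + C 1
    let P : Polynomial ℝ :=
      C (-2) * X ^ 6 + C (-(2 * w - 1)) * X ^ 5 + C (-45) * X ^ 4 +
        C (-4 * (2 * w - 1)) * X ^ 3 + C (-31) * X ^ 2 +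
        C (w - 1) * X + C 9
    let f : Polynomial ℝ := 4 * P + Q ^ 2
    let φ := algebraMap ℝ ℂ
    let ℓ : ℂ := φ (f.coeff 6)
    ∃ r : Fin 6 → ℂ, ∃ u v : ℝ,
      f.map φ = C ℓ * ∏ i, (X - C (r i)) ∧
      -- `u ∈ F = ℚ(√233)` and `u` is a unit of the ring of integers of `F`
      (∃ x y : ℚ, u = x + y * Real.sqrt 233) ∧
      IsIntegral ℤ u ∧ IsIntegral ℤ v ∧ u * v = 1 ∧
      ℓ ^ 10 * ∏ p ∈ Finset.univ.filter (fun p : Fin 6 × Fin 6 => p.1 < p.2),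
          (r p.1 - r p.2) ^ 2 = φ (2 ^ 12 * u) := by
  intro w Q P f φ ℓ
  set σ : ℂ := (Real.sqrt 233 : ℂ)
  have hσ : σ ^ 2 = 233 := by
    rw [← Complex.ofReal_pow, Real.sq_sqrt (by norm_num)]
    norm_num
  have hf : f.map φ = C (-8) * ((cubicFactor₁ σ).toPoly * (cubicFactor₂ σ).toPoly) := by
    refine Polynomial.funext fun z => ?_
    simp only [f, P, Q, w, φ, σ, Cubic.toPoly, cubicFactor₁, cubicFactor₂, Polynomial.map_add,
      Polynomial.map_mul, Polynomial.map_pow, Polynomial.map_sub, Polynomial.map_neg,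
      Polynomial.map_one, Polynomial.map_ofNat, map_C, map_X, map_neg, map_sub, map_one, map_mul,
      map_div₀, Complex.coe_algebraMap, Complex.ofReal_ofNat, Complex.ofReal_add,
      Complex.ofReal_one, eval_add, eval_mul, eval_ofNat, eval_neg, eval_C, eval_pow, eval_X,
      eval_sub, eval_one, one_mul]
    linear_combination (z ^ 4 / 2 + 1 / 8) * hσ
  have hℓ : ℓ = -8 := by
    rw [show ℓ = (f.map φ).coeff 6 from (coeff_map φ 6).symm, hf, coeff_C_mul, Cubic.coeff_toPoly_mul_toPoly_six]
    simp [cubicFactor₁, cubicFactor₂]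
  obtain ⟨a₁, a₂, a₃, hg⟩ := (cubicFactor₁ σ).exists_toPoly_eq_prod rfl
  obtain ⟨b₁, b₂, b₃, hh⟩ := (cubicFactor₂ σ).exists_toPoly_eq_prod rfl
  refine ⟨![a₁, a₂, a₃, b₁, b₂, b₃], -1, -1, ?_, ⟨-1, 0, by norm_num⟩,
    isIntegral_one.neg, isIntegral_one.neg, by norm_num, ?_⟩
  · rw [hf, hℓ, hg, hh, Fin.prod_univ_six]
    simp only [Matrix.cons_val, Matrix.cons_val_zero, Matrix.cons_val_one]
    ring
  · rw [hℓ, prod_sub_sq_roots_cubicFactor hσ hg hh]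
    simp [φ]
end
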